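/- arXiv:2501.11534 — 14 statements merged into one kernel-verified Lean document; each statement's English description precedes it below -/
import Mathlib

section
/- Let A be an associative commutative algebra over a field K and let R : A → A be a Rota–Baxter operator of weight λ ∈ K. Then the algebra AR = (A, ∘) with a ∘ b = a·R(b) satisfies the identity a ∘ ([x, y] ∘ b) − (a, x, y ∘ b) + (a, y, x ∘ b) = 0 for all a, b, x, y ∈ A. -/
/-- The product `a ∘ b = a * R b`. -/
def circ {K A : Type*} [Field K] [CommRing A] [Algebra K A]
    (R : A →ₗ[K] A) (a b : A) : A := a * R b

/-- The commutator `[a, b] = a ∘ b - b ∘ a` of the product `∘`. -/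
def brk {K A : Type*} [Field K] [CommRing A] [Algebra K A]
    (R : A →ₗ[K] A) (a b : A) : A := circ R a b - circ R b a

/-- The associator `(a, b, c) = a ∘ (b ∘ c) - (a ∘ b) ∘ c` of the product `∘`. -/
def assoc {K A : Type*} [Field K] [CommRing A] [Algebra K A]
    (R : A →ₗ[K] A) (a b c : A) : A := circ R a (circ R b c) - circ R (circ R a b) c

/-- If `R` is a Rota–Baxter operator of weight `lam` on an associative
commutative algebra `A` over a field `K`, then the algebra `(A, ∘)` with `a ∘ b = a * R b`
satisfies `a ∘ ([x, y] ∘ b) − (a, x, y ∘ b) + (a, y, x ∘ b) = 0`. -/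
theorem stmt_2 (K : Type*) [Field K] (A : Type*) [CommRing A] [Algebra K A]
    (lam : K) (R : A →ₗ[K] A)
    (hR : ∀ a b : A, R a * R b = R (a * R b + R a * b + lam • (a * b))) :
    ∀ a b x y : A,
      circ R a (circ R (brk R x y) b) - assoc R a x (circ R y b)
        + assoc R a y (circ R x b) = 0 := by
  intro a b x y
  simp only [circ, brk, assoc]
  have h1 := hR x (y * R b)
  have h2 := hR y (x * R b)
  simp only [map_add, map_smul] at h1 h2
  have key : R ((x * R y - y * R x) * R b) = R (R y * (x * R b)) - R (R x * (y * R b)) := by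
    rw [← map_sub]; exact congrArg R (by ring)
  have key2 : R (x * (y * R b)) = R (y * (x * R b)) := congrArg R (by ring)
  rw [key2] at h1
  rw [key]
  linear_combination a * h1 - a * h2
end

section
/- Let A be an associative commutative algebra over a field K and let R : A → A be a Rota–Baxter operator of weight λ ∈ K. Then the algebra AR = (A, ∘) with a ∘ b = a·R(b) satisfies the identity (x, a, [b, c]) + (x, b, [c, a]) + (x, c, [a, b]) = 0 for all a, b, c, x ∈ A. -/
/-- If `R` is a Rota–Baxter operator of weight `lam` on an associative
commutative algebra `A` over a field `K`, then the algebra `(A, ∘)` with `a ∘ b = a * R b`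
satisfies `(x, a, [b, c]) + (x, b, [c, a]) + (x, c, [a, b]) = 0`. -/
theorem stmt_3 (K : Type*) [Field K] (A : Type*) [CommRing A] [Algebra K A]
    (lam : K) (R : A →ₗ[K] A)
    (hR : ∀ a b : A, R a * R b = R (a * R b + R a * b + lam • (a * b))) :
    ∀ a b c x : A,
      assoc R x a (brk R b c) + assoc R x b (brk R c a) + assoc R x c (brk R a b) = 0 := by
  intro a b c x
  have key : ∀ p y : A, assoc R x p y = -(x * R (R p * y + lam • (p * y))) := by
    intro p y
    simp only [assoc, circ, mul_assoc, hR, map_add]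
    ring
  simp only [key, brk, circ]
  rw [← neg_add, ← neg_add, ← mul_add, ← mul_add, ← map_add, ← map_add]
  have : (R a * (b * R c - c * R b) + lam • (a * (b * R c - c * R b)) +
      (R b * (c * R a - a * R c) + lam • (b * (c * R a - a * R c))) +
      (R c * (a * R b - b * R a) + lam • (c * (a * R b - b * R a)))) = 0 := by
    simp only [Algebra.smul_def]; ring
  rw [this, map_zero, mul_zero, neg_zero]
end

section
/- Let A be an associative commutative algebra over a field K and let R : A → A be a Rota–Baxter operator of weight λ ∈ K. For the product a ∘ b = a·R(b), the Jordan associator satisfies ⟨a, b, c⟩ = −λ·(a·R(b·c) − R(a·b)·c) for all a, b, c ∈ A. -/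
/-- The Jordan product `{a, b} = a * R b + b * R a` of the product `a ∘ b = a * R b`. -/
def jprod {K A : Type*} [Field K] [CommRing A] [Algebra K A]
    (R : A →ₗ[K] A) (a b : A) : A := a * R b + b * R a

/-- The Jordan associator `⟨a, b, c⟩ = {a, {b, c}} − {{a, b}, c}`. -/
def jassoc {K A : Type*} [Field K] [CommRing A] [Algebra K A]
    (R : A →ₗ[K] A) (a b c : A) : A := jprod R a (jprod R b c) - jprod R (jprod R a b) c

/-- If `R` is a Rota–Baxter operator of weight `lam` on an associative
commutative algebra `A`, then the Jordan associator of the product `a ∘ b = a * R b`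
satisfies `⟨a, b, c⟩ = −lam • (a * R (b * c) − R (a * b) * c)`. -/
theorem stmt_4 (K : Type*) [Field K] (A : Type*) [CommRing A] [Algebra K A]
    (lam : K) (R : A →ₗ[K] A)
    (hR : ∀ a b : A, R a * R b = R (a * R b + R a * b + lam • (a * b))) :
    ∀ a b c : A, jassoc R a b c = -(lam • (a * R (b * c) - R (a * b) * c)) := by
  intro a b c
  simp only [jassoc, jprod, map_add, map_smul, smul_sub, smul_add, smul_eq_mul]
  have h1 := hR b a
  have h2 := hR b c
  simp only [map_add, map_smul] at h1 h2
  simp only [Algebra.smul_def] at h1 h2 ⊢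
  rw [mul_comm c (R b), mul_comm (R b) a, mul_comm b a] at *
  linear_combination c * h1 - a * h2
end

section
/- Let A be an associative commutative algebra over a field K and let R : A → A be a Rota–Baxter operator of weight λ ∈ K. Define f(a, b, c, u, v) = ⟨a, u, ⟨b, v, c⟩⟩ − ⟨a, v, ⟨b, u, c⟩⟩, where ⟨·,·,·⟩ is the Jordan associator of the product a ∘ b = a·R(b). Then f(a, b, c, u, v) = −f(b, a, c, u, v) for all a, b, c, u, v ∈ A. -/
set_option maxHeartbeats 1000000


/-- For a Rota–Baxter operator `R` of weight `lam` on an associative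
commutative algebra `A`, the polynomial
`f(a, b, c, u, v) = ⟨a, u, ⟨b, v, c⟩⟩ − ⟨a, v, ⟨b, u, c⟩⟩` satisfies
`f(a, b, c, u, v) = −f(b, a, c, u, v)`. -/
theorem stmt_5 (K : Type*) [Field K] (A : Type*) [CommRing A] [Algebra K A]
    (lam : K) (R : A →ₗ[K] A)
    (hR : ∀ a b : A, R a * R b = R (a * R b + R a * b + lam • (a * b))) :
    ∀ a b c u v : A,
      jassoc R a u (jassoc R b v c) - jassoc R a v (jassoc R b u c) =
        -(jassoc R b u (jassoc R a v c) - jassoc R b v (jassoc R a u c)) := by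
  set l : A := algebraMap K A lam with hl
  have hsmul : ∀ x : A, lam • x = l * x := fun x => Algebra.smul_def lam x
  have hR2 : ∀ x y : A, R x * R y = R (x * R y) + R (R x * y) + l * R (x * y) := by
    intro x y
    rw [hR, map_add, map_add, map_smul, hsmul]
  have key : ∀ a b c : A, jassoc R a b c = l * (c * R (a * b) - a * R (b * c)) := by
    intro a b c
    simp only [jassoc, jprod, map_add]
    have h1 := hR2 c a
    have h2 := hR2 b a
    have h3 := hR2 b c
    have h4 := hR2 a c
    have hc : ∀ x y : A, R (x * y) = R (y * x) := fun x y => by rw [mul_comm]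
    linear_combination b * h1 + c * h2 - a * h3 - b * h4
      - a * hc b (R c) + a * hc c (R b) + a * l * hc c b
      + b * hc c (R a) + b * hc (R c) a + b * l * hc c a
      - c * hc a (R b) + c * hc b (R a) + c * l * hc b a
      + a * hc b (R c) + a * l * hc b c - c * hc b (R a)
  have key' : ∀ a b c : A, jassoc R a b c = lam • (c * R (a * b) - a * R (b * c)) := by
    intro a b c; rw [key, hsmul]
  intro a b c u v
  simp only [key', mul_smul_comm, smul_mul_assoc, smul_sub, map_smul, smul_add,
    mul_sub, sub_mul, map_sub, map_mul, map_add]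
  simp only [hsmul]
  have h1 := hR2 (v*c) (a*u)
  have h2 := hR2 (u*c) (a*v)
  have h3 := hR2 (v*c) (b*u)
  have h4 := hR2 (u*c) (b*v)
  simp only [mul_comm, mul_assoc, mul_left_comm] at h1 h2 h3 h4 ⊢
  linear_combination (l*l) * ( - (b * h1) + b * h2 - a * h3 + a * h4 )
end

section
/- Let A be an associative commutative algebra over a field K of characteristic 0 and let R : A → A be a Rota–Baxter operator of weight λ ∈ K. Then the Jordan algebra AR⁺ = (A, {·,·}) with {a, b} = a·R(b) + b·R(a) satisfies the identity ⟨a, u, ⟨b, v, c⟩⟩ − ⟨a, v, ⟨b, u, c⟩⟩ + ⟨b, u, ⟨a, v, c⟩⟩ − ⟨b, v, ⟨a, u, c⟩⟩ = 0 for all a, b, c, u, v ∈ A. -/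
set_option maxHeartbeats 4000000 in
/-- For a Rota–Baxter operator `R` of weight `lam` on an associative
commutative algebra over a field of characteristic `0`, the Jordan algebra
`AR⁺ = (A, {·,·})` with `{a, b} = a * R b + b * R a` satisfies
`⟨a, u, ⟨b, v, c⟩⟩ − ⟨a, v, ⟨b, u, c⟩⟩ + ⟨b, u, ⟨a, v, c⟩⟩ − ⟨b, v, ⟨a, u, c⟩⟩ = 0`. -/
theorem stmt_6 (K : Type*) [Field K] [CharZero K] (A : Type*) [CommRing A] [Algebra K A]
    (lam : K) (R : A →ₗ[K] A)
    (hR : ∀ a b : A, R a * R b = R (a * R b + R a * b + lam • (a * b))) :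
    ∀ a b c u v : A,
      jassoc R a u (jassoc R b v c) - jassoc R a v (jassoc R b u c)
        + jassoc R b u (jassoc R a v c) - jassoc R b v (jassoc R a u c) = 0 := by
  intro a b c u v
  have h2 : ∀ x a b : A, x * R a * R b = x * R (a * R b + R a * b + lam • (a * b)) := by
    intro x a b; rw [mul_assoc, hR]
  simp only [jassoc, jprod, map_add, map_neg, map_sub, map_smul, hR, h2, smul_add,
    mul_smul_comm, smul_mul_assoc, smul_smul, mul_add, add_mul, neg_mul, mul_neg, smul_neg]
  ring_nf
  simp only [map_add, map_neg, map_sub, map_smul, hR, h2, smul_add,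
    mul_smul_comm, smul_mul_assoc, smul_smul, mul_add, add_mul, neg_mul, mul_neg, smul_neg]
  ring_nf
  simp only [map_add, map_neg, map_sub, map_smul, hR, h2, smul_add,
    mul_smul_comm, smul_mul_assoc, smul_smul, mul_add, add_mul, neg_mul, mul_neg, smul_neg]
  ring_nf
  simp only [smul_add, smul_sub, smul_neg, smul_smul]
  ring_nf
end

section
/- Let A be an associative commutative algebra over a field K of characteristic 0 and let R : A → A be a Rota–Baxter operator of weight λ ∈ K. Then the algebra AR⁻ = (A, [·,·]) with [a, b] = a·R(b) − b·R(a) satisfies the Tortkara identity: [[a, u], [b, v]] + [[a, v], [b, u]] − [jac(a, u, b), v] − [jac(a, v, b), u] = 0 for all a, b, u, v ∈ A, where jac(a, b, c) = [[a, b], c] + [[b, c], a] + [[c, a], b]. -/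
/-- The commutator `[a, b] = a * R b − b * R a` of the product `a ∘ b = a * R b`. -/
def lbrk {K A : Type*} [Field K] [CommRing A] [Algebra K A]
    (R : A →ₗ[K] A) (a b : A) : A := a * R b - b * R a

/-- The Jacobian `jac(a, b, c) = [[a, b], c] + [[b, c], a] + [[c, a], b]`. -/
def jacb {K A : Type*} [Field K] [CommRing A] [Algebra K A]
    (R : A →ₗ[K] A) (a b c : A) : A :=
  lbrk R (lbrk R a b) c + lbrk R (lbrk R b c) a + lbrk R (lbrk R c a) b

set_option maxHeartbeats 4000000 in
/-- For a Rota–Baxter operator `R` of weight `lam` on an associative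
commutative algebra over a field of characteristic `0`, the algebra `AR⁻ = (A, [·,·])`
with `[a, b] = a * R b − b * R a` satisfies the Tortkara identity. -/
theorem stmt_7 (K : Type*) [Field K] [CharZero K] (A : Type*) [CommRing A] [Algebra K A]
    (lam : K) (R : A →ₗ[K] A)
    (hR : ∀ a b : A, R a * R b = R (a * R b + R a * b + lam • (a * b))) :
    ∀ a b u v : A,
      lbrk R (lbrk R a u) (lbrk R b v) + lbrk R (lbrk R a v) (lbrk R b u)
        - lbrk R (jacb R a u b) v - lbrk R (jacb R a v b) u = 0 := by
  intro a b u v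
  obtain ⟨C, hR2, hC⟩ : ∃ C : A, (∀ x y : A, R x * R y = R (x * R y) + R (R x * y) + C * R (x * y)) ∧ (∀ x : A, R (C * x) = C * R x) :=
    ⟨algebraMap K A lam, fun x y => by rw [hR x y, map_add, map_add, map_smul, Algebra.smul_def],
     fun x => by rw [← Algebra.smul_def, map_smul, Algebra.smul_def]⟩
  simp only [lbrk, jacb]
  have h1 : R (-a * R (-b * R u + u * R b) - b * R (a * R u - u * R a) - u * R (-a * R b + b * R a)) = R (a * R (b * R u) - a * R (u * R b) - b * R (a * R u) + b * R (u * R a) + u * R (a * R b) - u * R (b * R a)) := by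
    have e : (-a * R (-b * R u + u * R b) - b * R (a * R u - u * R a) - u * R (-a * R b + b * R a) : A) = a * R (b * R u) - a * R (u * R b) - b * R (a * R u) + b * R (u * R a) + u * R (a * R b) - u * R (b * R a) := by linear_combination (norm := ring_nf) (-b) * (map_add R (a * R u) (-u * R a)) + (-b) * (map_neg R (u * R a)) + (-a) * (map_add R (-b * R u) (u * R b)) + (-a) * (map_neg R (b * R u)) + (-u) * (map_add R (-a * R b) (b * R a)) + (-u) * (map_neg R (a * R b))
    exact congrArg (fun z : A => R z) e
  have h2 : R (-a * R (-b * R v + v * R b) - b * R (a * R v - v * R a) - v * R (-a * R b + b * R a)) = R (a * R (b * R v) - a * R (v * R b) - b * R (a * R v) + b * R (v * R a) + v * R (a * R b) - v * R (b * R a)) := by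
    have e : (-a * R (-b * R v + v * R b) - b * R (a * R v - v * R a) - v * R (-a * R b + b * R a) : A) = a * R (b * R v) - a * R (v * R b) - b * R (a * R v) + b * R (v * R a) + v * R (a * R b) - v * R (b * R a) := by linear_combination (norm := ring_nf) (-b) * (map_add R (a * R v) (-v * R a)) + (-b) * (map_neg R (v * R a)) + (-a) * (map_add R (-b * R v) (v * R b)) + (-a) * (map_neg R (b * R v)) + (-v) * (map_add R (-a * R b) (b * R a)) + (-v) * (map_neg R (a * R b))
    exact congrArg (fun z : A => R z) e
  have h3 : R (b * R a * R v) = R (b * C * R (a * v) + b * R (a * R v) + b * R (v * R a)) := by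
    have e : (b * R a * R v : A) = b * C * R (a * v) + b * R (a * R v) + b * R (v * R a) := by linear_combination (norm := ring_nf) (b) * (hR2 (a) (v))
    exact congrArg (fun z : A => R z) e
  have h4 : R (v * R a * R b) = R (v * C * R (a * b) + v * R (a * R b) + v * R (b * R a)) := by
    have e : (v * R a * R b : A) = v * C * R (a * b) + v * R (a * R b) + v * R (b * R a) := by linear_combination (norm := ring_nf) (v) * (hR2 (a) (b))
    exact congrArg (fun z : A => R z) e
  have h5 : R (a * R v * R b) = R (a * C * R (b * v) + a * R (b * R v) + a * R (v * R b)) := by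
    have e : (a * R v * R b : A) = a * C * R (b * v) + a * R (b * R v) + a * R (v * R b) := by linear_combination (norm := ring_nf) (a) * (hR2 (v) (b))
    exact congrArg (fun z : A => R z) e
  have h6 : R (a * R u * R b) = R (a * C * R (b * u) + a * R (b * R u) + a * R (u * R b)) := by
    have e : (a * R u * R b : A) = a * C * R (b * u) + a * R (b * R u) + a * R (u * R b) := by linear_combination (norm := ring_nf) (a) * (hR2 (u) (b))
    exact congrArg (fun z : A => R z) e
  have h7 : R (b * R u * R a) = R (b * C * R (a * u) + b * R (a * R u) + b * R (u * R a)) := by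
    have e : (b * R u * R a : A) = b * C * R (a * u) + b * R (a * R u) + b * R (u * R a) := by linear_combination (norm := ring_nf) (b) * (hR2 (u) (a))
    exact congrArg (fun z : A => R z) e
  have h8 : R (u * R a * R b) = R (u * C * R (a * b) + u * R (a * R b) + u * R (b * R a)) := by
    have e : (u * R a * R b : A) = u * C * R (a * b) + u * R (a * R b) + u * R (b * R a) := by linear_combination (norm := ring_nf) (u) * (hR2 (a) (b))
    exact congrArg (fun z : A => R z) e
  linear_combination (norm := ring_nf) (a * R u - u * R a) * (map_add R (b * R v) (-v * R b)) + (a * R u - u * R a) * (map_neg R (v * R b)) + (v * R b) * (map_add R (a * R u) (-u * R a)) + (v * R b) * (map_neg R (u * R a)) + (a * R v - v * R a) * (map_add R (b * R u) (-u * R b)) + (a * R v - v * R a) * (map_neg R (u * R b)) + (u * R b) * (map_add R (a * R v) (-v * R a)) + (u * R b) * (map_neg R (v * R a)) + (a * R v) * (map_add R (-b * R u) (u * R b)) + (a * R v) * (map_neg R (b * R u)) + (u * R v + v * R u) * (map_add R (-a * R b) (b * R a)) + (u * R v + v * R u) * (map_neg R (a * R b)) + (v) * (h1) + (v) * (map_add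 R (a * R (b * R u)) (-a * R (u * R b) - b * R (a * R u) + b * R (u * R a) + u * R (a * R b) - u * R (b * R a))) + (v) * (map_add R (-a * R (u * R b)) (-b * R (a * R u) + b * R (u * R a) + u * R (a * R b) - u * R (b * R a))) + (v) * (map_neg R (a * R (u * R b))) + (v) * (map_add R (-b * R (a * R u)) (b * R (u * R a) + u * R (a * R b) - u * R (b * R a))) + (v) * (map_neg R (b * R (a * R u))) + (v) * (map_add R (b * R (u * R a)) (u * R (a * R b) - u * R (b * R a))) + (v) * (map_add R (u * R (a * R b)) (-u * R (b * R a))) + (v) * (map_neg R (u * R (b * R a))) + (a * R u) * (map_add R (-b * R v) (v * R b)) + (a * R u) * (map_neg R (b * R v)) + (u) * (h2) + (u) * (map_add R (a * R (b * R v)) (-a * R (v * R b) - b * R (a * R v) + b * R (v * R a) + v * R (a * R b) - v * R (b * R a))) + (u) * (map_add R (-a * R (v * R b)) (-b * R (a * R v) + b * R (v * R a) + v * R (a * R b) - v * R (b * R a))) + (u) * (map_neg R (a * R (v * R b))) + (u) * (map_add R (-b * R (a * R v)) (b * R (v * R a) + v * R (a * R b) - v * R (b * R a))) + (u) * (map_neg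 R (b * R (a * R v))) + (u) * (map_add R (b * R (v * R a)) (v * R (a * R b) - v * R (b * R a))) + (u) * (map_add R (v * R (a * R b)) (-v * R (b * R a))) + (u) * (map_neg R (v * R (b * R a))) + (-u) * (hR2 (a) (b * R v)) + (u) * (hR2 (a) (v * R b)) + (-u) * (hR2 (v) (a * R b)) + (u) * (hR2 (v) (b * R a)) + (u) * (hR2 (b) (a * R v)) + (-u) * (hR2 (b) (v * R a)) + (-v) * (hR2 (u) (a * R b)) + (v) * (hR2 (u) (b * R a)) + (-v) * (hR2 (a) (b * R u)) + (v) * (hR2 (a) (u * R b)) + (v) * (hR2 (b) (a * R u)) + (-v) * (hR2 (b) (u * R a))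
end

section
/- Let K be a field, let I be a linearly ordered set, and let ε : I → K be any function. On the free K-module with basis (e_i)_{i ∈ I}, define a bilinear product by e_i ∘ e_j = ε(j)·e_i if i > j, and e_i ∘ e_j = 0 if i ≤ j. Then this product is right-commutative, (x ∘ y) ∘ z = (x ∘ z) ∘ y, and satisfies the identity x ∘ ([y, z] ∘ w) − (x, y, z ∘ w) + (x, z, y ∘ w) = 0 for all elements x, y, z, w, where [a, b] = a ∘ b − b ∘ a and (a, b, c) = a ∘ (b ∘ c) − (a ∘ b) ∘ c. -/
/-!
Let `S u i = ∑_{k < i} ε k * u k` (`Finsupp.lowerSum`). On basis vectors the product is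
`x ∘ y = S y • x` (pointwise), so right multiplications are commuting diagonal operators, which
gives right-commutativity. Splitting the square `{k < i} × {l < i}` along `k < l`, `k = l`,
`k > l` shows that `S` is a Rota–Baxter operator with the weight term `S (ε • (a * b))`.
Expanding the associators with this identity for `(y, w ∘ z)` and `(z, w ∘ y)`, everything
cancels, the two weight terms because `y * (w ∘ z) = z * (w ∘ y)`.
-/

namespace Finsupp

theorem pointwise_smul_single {α R : Type*} [Semiring R] (f : α → R) (k : α) (c : R) :
    f • single k c = single k (f k * c) := by
  ext i
  rcases eq_or_ne k i with rfl | h <;> simp [*]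

theorem single_mul_single_of_ne {α R : Type*} [MulZeroClass R] {k l : α} (h : k ≠ l) (c d : R) :
    single k c * single l d = 0 := by
  ext i
  rcases eq_or_ne k i with rfl | h' <;> simp [*]

variable {I K : Type*} [LinearOrder I] [CommRing K] (ε : I → K)

noncomputable def lowerSum : (I →₀ K) →ₗ[K] I → K :=
  linearCombination K fun k i => if k < i then ε k else 0

@[simp]
theorem lowerSum_single (k : I) (c : K) (i : I) :
    lowerSum ε (single k c) i = if k < i then ε k * c else 0 := by
  simp only [lowerSum, linearCombination_single, Pi.smul_apply, smul_eq_mul]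
  split_ifs <;> ring

theorem lowerSum_mul_lowerSum (a b : I →₀ K) :
    lowerSum ε a * lowerSum ε b =
      lowerSum ε (lowerSum ε b • a) + lowerSum ε (lowerSum ε a • b) +
        lowerSum ε (ε • (a * b)) := by
  induction a using Finsupp.induction_linear with
  | zero => simp
  | add a₁ a₂ h₁ h₂ =>
    simp only [map_add, add_smul, smul_add, add_mul, h₁, h₂]
    abel
  | single k c =>
  induction b using Finsupp.induction_linear with
  | zero => simp
  | add b₁ b₂ h₁ h₂ =>
    simp only [map_add, add_smul, smul_add, mul_add, h₁, h₂]
    abel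
  | single l d =>
    ext i
    rcases lt_trichotomy k l with hkl | rfl | hkl
    · simp [pointwise_smul_single, single_mul_single_of_ne hkl.ne]
      split_ifs <;> first | order | ring
    · simp [pointwise_smul_single, ← single_mul]
      split_ifs <;> first | order | ring
    · simp [pointwise_smul_single, single_mul_single_of_ne hkl.ne']
      split_ifs <;> first | order | ring

noncomputable def orderedMul : (I →₀ K) →ₗ[K] (I →₀ K) →ₗ[K] (I →₀ K) :=
  ((Algebra.lsmul K K (I →₀ K)).toLinearMap ∘ₗ lowerSum ε).flip

theorem orderedMul_apply (x y : I →₀ K) : orderedMul ε x y = lowerSum ε y • x := rfl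

theorem orderedMul_single_single (i j : I) :
    orderedMul ε (single i 1) (single j 1) = if j < i then ε j • single i 1 else 0 := by
  ext k
  simp only [orderedMul_apply, lowerSum_single, mul_one, pointwise_smul_single]
  split_ifs <;> simp

theorem eq_orderedMul {m : (I →₀ K) →ₗ[K] (I →₀ K) →ₗ[K] (I →₀ K)}
    (hm : ∀ i j : I, m (single i 1) (single j 1) = if j < i then ε j • single i 1 else 0) :
    m = orderedMul ε := by
  ext i j : 4
  exact (hm i j).trans (orderedMul_single_single ε i j).symm

theorem orderedMul_right_comm (x y z : I →₀ K) :
    orderedMul ε (orderedMul ε x y) z = orderedMul ε (orderedMul ε x z) y := by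
  simp only [orderedMul_apply, smul_comm (lowerSum ε z)]

theorem orderedMul_commutator_sub_associator_add_associator (x y z w : I →₀ K) :
    orderedMul ε x (orderedMul ε (orderedMul ε y z - orderedMul ε z y) w)
        - (orderedMul ε x (orderedMul ε y (orderedMul ε z w))
          - orderedMul ε (orderedMul ε x y) (orderedMul ε z w))
        + (orderedMul ε x (orderedMul ε z (orderedMul ε y w))
          - orderedMul ε (orderedMul ε x z) (orderedMul ε y w)) = 0 := by
  have hy := lowerSum_mul_lowerSum ε y (lowerSum ε w • z)
  have hz := lowerSum_mul_lowerSum ε z (lowerSum ε w • y)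
  have hyz : y * (lowerSum ε w • z) = z * (lowerSum ε w • y) := by
    ext i
    simp only [mul_apply, coe_pointwise_smul, smul_eq_mul, Pi.mul_apply]
    ring
  simp only [orderedMul_apply]
  simp only [map_sub, smul_sub, smul_comm (lowerSum ε w)] at hy hz ⊢
  rw [hyz] at hy
  ext i
  have hyi := congrFun hy i
  have hzi := congrFun hz i
  simp only [Pi.add_apply, Pi.mul_apply] at hyi hzi
  simp only [add_apply, sub_apply, coe_pointwise_smul, smul_eq_mul, Pi.mul_apply, Pi.sub_apply,
    zero_apply]
  linear_combination x i * (hyi - hzi)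

end Finsupp

/-- On the free `K`-module with basis `(e_i)_{i ∈ I}` over a linearly
ordered index set `I`, the bilinear product determined by `e_i ∘ e_j = ε j • e_i` if
`i > j` and `e_i ∘ e_j = 0` if `i ≤ j` is right-commutative and satisfies the identity
`x ∘ ([y, z] ∘ w) − (x, y, z ∘ w) + (x, z, y ∘ w) = 0`. -/
theorem stmt_8 (K : Type*) [Field K] (I : Type*) [LinearOrder I] (ε : I → K)
    (m : (I →₀ K) →ₗ[K] (I →₀ K) →ₗ[K] (I →₀ K))
    (hm : ∀ i j : I, m (Finsupp.single i 1) (Finsupp.single j 1) =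
      if j < i then ε j • Finsupp.single i 1 else 0) :
    (∀ x y z : I →₀ K, m (m x y) z = m (m x z) y) ∧
    (∀ x y z w : I →₀ K,
      m x (m (m y z - m z y) w)
        - (m x (m y (m z w)) - m (m x y) (m z w))
        + (m x (m z (m y w)) - m (m x z) (m y w)) = 0) := by
  obtain rfl := Finsupp.eq_orderedMul ε hm
  exact ⟨Finsupp.orderedMul_right_comm ε,
    Finsupp.orderedMul_commutator_sub_associator_add_associator ε⟩
end

section
/- Let K be a field of characteristic 0 and let J : K[x] → K[x] be the K-linear integration operator with J(xⁿ) = xⁿ⁺¹/(n+1). For each n ≥ 0, the product a ⋆ b = Σ_{i=0}^{n} C(n,i)·Jⁱ(a)·Jⁿ⁻ⁱ(b) on K[x] is commutative and associative. -/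
open Polynomial Finset

/-- The product `a ⋆ b = Σ_{i=0}^{n} C(n,i) • (Jⁱ a * Jⁿ⁻ⁱ b)`. -/
noncomputable def starProd {K : Type*} [Field K]
    (J : Polynomial K →ₗ[K] Polynomial K) (n : ℕ) (a b : Polynomial K) : Polynomial K :=
  ∑ i ∈ Finset.range (n + 1), (n.choose i : K) • ((J ^ i) a * (J ^ (n - i)) b)

section Aux
variable {K : Type*} [Field K] [CharZero K]
variable (J : Polynomial K →ₗ[K] Polynomial K)

lemma sp_add_left (n : ℕ) (a a' b : Polynomial K) :
    starProd J n (a + a') b = starProd J n a b + starProd J n a' b := by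
  simp [starProd, add_mul, smul_add, Finset.sum_add_distrib]

lemma sp_add_right (n : ℕ) (a b b' : Polynomial K) :
    starProd J n a (b + b') = starProd J n a b + starProd J n a b' := by
  simp [starProd, mul_add, smul_add, Finset.sum_add_distrib]

lemma sp_smul_left (n : ℕ) (c : K) (a b : Polynomial K) :
    starProd J n (c • a) b = c • starProd J n a b := by
  simp only [starProd, map_smul, smul_mul_assoc, Finset.smul_sum]
  exact Finset.sum_congr rfl fun i _ => smul_comm _ _ _

lemma sp_smul_right (n : ℕ) (c : K) (a b : Polynomial K) :
    starProd J n a (c • b) = c • starProd J n a b := by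
  simp only [starProd, map_smul, mul_smul_comm, Finset.smul_sum]
  exact Finset.sum_congr rfl fun i _ => smul_comm _ _ _

lemma sp_comm (n : ℕ) (a b : Polynomial K) : starProd J n a b = starProd J n b a := by
  unfold starProd
  rw [← Finset.sum_range_reflect]
  refine Finset.sum_congr rfl fun i hi => ?_
  have hin : i ≤ n := Nat.lt_succ_iff.mp (Finset.mem_range.mp hi)
  have h1 : n + 1 - 1 - i = n - i := by omega
  have h2 : n - (n - i) = i := by omega
  rw [h1, h2, Nat.choose_symm hin, mul_comm]

/-- The structural scalar. -/
noncomputable def sC (K : Type*) [Field K] (n p q : ℕ) : K :=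
  ((p + q + 2 * n).choose (p + n) : K) * (p.factorial : K) * (q.factorial : K) /
    ((p + q + n).factorial : K)

lemma vand (n p q : ℕ) :
    ∑ i ∈ Finset.range (n + 1), n.choose i * (p + q + n).choose (p + i)
      = (p + q + 2 * n).choose (p + n) := by
  have h : p + q + 2 * n = n + (p + q + n) := by ring
  rw [h, Nat.add_choose_eq, Finset.Nat.sum_antidiagonal_eq_sum_range_succ_mk]
  rw [← Finset.sum_subset (Finset.range_subset_range.mpr (by omega : n + 1 ≤ p + n + 1))
      (fun x hx hx' => by
        simp only [Finset.mem_range] at hx hx'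
        simp [Nat.choose_eq_zero_of_lt (show n < x by omega)])]
  rw [← Finset.sum_range_reflect]
  refine Finset.sum_congr rfl fun i hi => ?_
  have hin : i ≤ n := Nat.lt_succ_iff.mp (Finset.mem_range.mp hi)
  have h1 : n + 1 - 1 - i = n - i := by omega
  rw [h1, Nat.choose_symm hin]
  congr 2
  omega

lemma sC_eq (n p q : ℕ) :
    sC K n p q = ((p + q + 2 * n).factorial : K) * (p.factorial : K) * (q.factorial : K) /
      (((p + n).factorial : K) * ((q + n).factorial : K) * ((p + q + n).factorial : K)) := by
  unfold sC
  have hk : p + n ≤ p + q + 2 * n := by omega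
  have h1 := Nat.choose_mul_factorial_mul_factorial hk
  have e : p + q + 2 * n - (p + n) = q + n := by omega
  rw [e] at h1
  have h1K : (((p + q + 2 * n).choose (p + n) : K)) * ((p + n).factorial : K) *
      ((q + n).factorial : K) = ((p + q + 2 * n).factorial : K) := by exact_mod_cast h1
  have h2 : ((p + n).factorial : K) ≠ 0 := Nat.cast_ne_zero.mpr (Nat.factorial_ne_zero _)
  have h3 : ((q + n).factorial : K) ≠ 0 := Nat.cast_ne_zero.mpr (Nat.factorial_ne_zero _)
  have h4 : ((p + q + n).factorial : K) ≠ 0 := Nat.cast_ne_zero.mpr (Nat.factorial_ne_zero _)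
  field_simp
  rw [← h1K]
  ring

lemma sC_assoc (n p q r : ℕ) :
    sC K n p q * sC K n (p + q + n) r = sC K n q r * sC K n p (q + r + n) := by
  rw [sC_eq, sC_eq, sC_eq, sC_eq]
  have e1 : p + q + n + r + 2 * n = p + q + r + 3 * n := by ring
  have e2 : p + q + n + n = p + q + 2 * n := by ring
  have e3 : p + q + n + r + n = p + q + r + 2 * n := by ring
  have e4 : p + (q + r + n) + 2 * n = p + q + r + 3 * n := by ring
  have e5 : q + r + n + n = q + r + 2 * n := by ring
  have e6 : p + (q + r + n) + n = p + q + r + 2 * n := by ring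
  rw [e1, e2, e3, e4, e5, e6]
  have ne : ∀ m : ℕ, ((m.factorial : K)) ≠ 0 :=
    fun m => Nat.cast_ne_zero.mpr (Nat.factorial_ne_zero _)
  rw [div_mul_div_comm, div_mul_div_comm, div_eq_div_iff
    (mul_ne_zero (mul_ne_zero (mul_ne_zero (ne _) (ne _)) (ne _))
      (mul_ne_zero (mul_ne_zero (ne _) (ne _)) (ne _)))
    (mul_ne_zero (mul_ne_zero (mul_ne_zero (ne _) (ne _)) (ne _))
      (mul_ne_zero (mul_ne_zero (ne _) (ne _)) (ne _)))]
  ring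

variable (hJ : ∀ m : ℕ, J (X ^ m) = (((m : K) + 1)⁻¹) • X ^ (m + 1))
include hJ

lemma Jpow_X (i m : ℕ) :
    (J ^ i) (X ^ m : Polynomial K)
      = ((m.factorial : K) / ((m + i).factorial : K)) • X ^ (m + i) := by
  induction i generalizing m with
  | zero =>
    simp [div_self (show ((m.factorial : K)) ≠ 0 from Nat.cast_ne_zero.mpr m.factorial_ne_zero)]
  | succ i ih =>
    rw [pow_succ, Module.End.mul_apply, hJ m, map_smul, ih (m + 1), smul_smul]
    have e : m + (i + 1) = m + 1 + i := by omega
    rw [e]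
    congr 1
    have h1 : ((m : K) + 1) ≠ 0 := Nat.cast_add_one_ne_zero m
    have h2 : ((m + 1 + i).factorial : K) ≠ 0 := Nat.cast_ne_zero.mpr (Nat.factorial_ne_zero _)
    rw [Nat.factorial_succ]
    push_cast
    field_simp

lemma sp_Xpow (n p q : ℕ) :
    starProd J n (X ^ p : Polynomial K) (X ^ q) = sC K n p q • X ^ (p + q + n) := by
  unfold starProd
  have key : ∀ i ∈ Finset.range (n + 1),
      (n.choose i : K) • ((J ^ i) (X ^ p : Polynomial K) * (J ^ (n - i)) (X ^ q))
        = (((n.choose i * (p + q + n).choose (p + i) : ℕ) : K) *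
            ((p.factorial : K) * (q.factorial : K) / ((p + q + n).factorial : K)))
          • X ^ (p + q + n) := by
    intro i hi
    have hin : i ≤ n := Nat.lt_succ_iff.mp (Finset.mem_range.mp hi)
    rw [Jpow_X J hJ, Jpow_X J hJ, smul_mul_smul_comm, ← pow_add, smul_smul]
    have e : p + i + (q + (n - i)) = p + q + n := by omega
    rw [e]
    congr 1
    have hk : p + i ≤ p + q + n := by omega
    have h1 := Nat.choose_mul_factorial_mul_factorial hk
    have e2 : p + q + n - (p + i) = q + (n - i) := by omega
    rw [e2] at h1
    have h1K : (((p + q + n).choose (p + i) : K)) * ((p + i).factorial : K) *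
        ((q + (n - i)).factorial : K) = ((p + q + n).factorial : K) := by exact_mod_cast h1
    have hpi : ((p + i).factorial : K) ≠ 0 := Nat.cast_ne_zero.mpr (Nat.factorial_ne_zero _)
    have hqi : ((q + (n - i)).factorial : K) ≠ 0 := Nat.cast_ne_zero.mpr (Nat.factorial_ne_zero _)
    have hpqn : ((p + q + n).factorial : K) ≠ 0 := Nat.cast_ne_zero.mpr (Nat.factorial_ne_zero _)
    push_cast
    field_simp
    rw [← h1K]
    ring
  rw [Finset.sum_congr rfl key, ← Finset.sum_smul, ← Finset.sum_mul, ← Nat.cast_sum,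
    vand n p q]
  unfold sC
  congr 1
  ring

lemma sp_assoc' (n p q r : ℕ) :
    starProd J n (starProd J n (X ^ p : Polynomial K) (X ^ q)) (X ^ r)
      = starProd J n (X ^ p) (starProd J n (X ^ q) (X ^ r)) := by
  rw [sp_Xpow J hJ, sp_Xpow J hJ, sp_smul_left, sp_smul_right, sp_Xpow J hJ, sp_Xpow J hJ,
    smul_smul, smul_smul]
  have e1 : p + q + n + r + n = p + q + r + 2 * n := by ring
  have e2 : p + (q + r + n) + n = p + q + r + 2 * n := by ring
  rw [e1, e2, sC_assoc, mul_comm]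

end Aux

/-- For the integration operator `J` on `K[x]` (char `K` = 0), the product
`a ⋆ b = Σ_{i=0}^{n} C(n,i) • (Jⁱ a * Jⁿ⁻ⁱ b)` is commutative and associative. -/
theorem stmt_9 (K : Type*) [Field K] [CharZero K]
    (J : Polynomial K →ₗ[K] Polynomial K)
    (hJ : ∀ m : ℕ, J (X ^ m) = (((m : K) + 1)⁻¹) • X ^ (m + 1)) (n : ℕ) :
    (∀ a b : Polynomial K, starProd J n a b = starProd J n b a) ∧
    (∀ a b c : Polynomial K,
      starProd J n (starProd J n a b) c = starProd J n a (starProd J n b c)) := by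
  refine ⟨sp_comm J n, ?_⟩
  intro a b c
  induction a using Polynomial.induction_on' with
  | add u v hu hv => rw [sp_add_left, sp_add_left, sp_add_left, hu, hv]
  | monomial p cp =>
    induction b using Polynomial.induction_on' with
    | add u v hu hv =>
      rw [sp_add_right, sp_add_left, sp_add_left, sp_add_right, hu, hv]
    | monomial q cq =>
      induction c using Polynomial.induction_on' with
      | add u v hu hv =>
        rw [sp_add_right, sp_add_right, sp_add_right, hu, hv]
      | monomial r cr =>
        rw [← Polynomial.smul_X_eq_monomial, ← Polynomial.smul_X_eq_monomial,
          ← Polynomial.smul_X_eq_monomial]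
        simp only [sp_smul_left, sp_smul_right, sp_assoc' J hJ]
end

section
/- Let K be a field of characteristic 0 and let J : K[x] → K[x] be the K-linear integration operator with J(xⁿ) = xⁿ⁺¹/(n+1). For each n ≥ 0, the product a ⋆ b = Σ_{i=0}^{n} C(n,i)·Jⁱ(a)·Jⁿ⁻ⁱ⁺¹(b) on K[x] is left-Zinbiel: (a ⋆ b) ⋆ c = a ⋆ (b ⋆ c) + a ⋆ (c ⋆ b) for all a, b, c ∈ K[x]. -/
open Polynomial

/-- The product `a ⋆ b = Σ_{i=0}^{n} C(n,i) • (Jⁱ a * Jⁿ⁻ⁱ⁺¹ b)`. -/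
noncomputable def starProd1 {K : Type*} [Field K]
    (J : Polynomial K →ₗ[K] Polynomial K) (n : ℕ) (a b : Polynomial K) : Polynomial K :=
  ∑ i ∈ Finset.range (n + 1), (n.choose i : K) • ((J ^ i) a * (J ^ (n - i + 1)) b)



section
variable {K : Type*} [Field K] [CharZero K]
  (J : Polynomial K →ₗ[K] Polynomial K)
  (hJ : ∀ m : ℕ, J (X ^ m) = (((m : K) + 1)⁻¹) • X ^ (m + 1))

include hJ

/-- derivative ∘ J = id -/
lemma hD : ∀ p : Polynomial K, derivative (J p) = p := by
  intro p
  induction p using Polynomial.induction_on' with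
  | add p q hp hq => rw [map_add, map_add, hp, hq]
  | monomial m r =>
    have h1 : ((m : K) + 1) ≠ 0 := by exact_mod_cast (Nat.cast_add_one_ne_zero (R := K) m)
    rw [← C_mul_X_pow_eq_monomial, ← smul_eq_C_mul, map_smul, hJ, smul_comm,
      derivative_smul, derivative_smul, derivative_X_pow]
    simp only [Nat.cast_add, Nat.cast_one, add_tsub_cancel_right]
    rw [← smul_eq_C_mul, smul_comm r, smul_smul, inv_mul_cancel₀ h1, one_smul]

omit [CharZero K] in
/-- J p has zero constant coefficient -/
lemma hc0 : ∀ p : Polynomial K, (J p).coeff 0 = 0 := by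
  intro p
  induction p using Polynomial.induction_on' with
  | add p q hp hq => rw [map_add, coeff_add, hp, hq, add_zero]
  | monomial m r =>
    rw [← C_mul_X_pow_eq_monomial, ← smul_eq_C_mul, map_smul, hJ, smul_smul, coeff_smul,
      coeff_X_pow]
    simp

/-- J ∘ derivative = id on polynomials with zero constant term -/
lemma hJD (p : Polynomial K) (h : p.coeff 0 = 0) : J (derivative p) = p := by
  have h1 : derivative (J (derivative p)) = derivative p := hD J hJ _
  have h2 : derivative (J (derivative p) - p) = 0 := by rw [map_sub, h1, sub_self]
  have h3 := eq_C_of_derivative_eq_zero h2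
  have h4 : (J (derivative p) - p).coeff 0 = 0 := by
    rw [coeff_sub, hc0 J hJ, h, sub_zero]
  rw [h4, map_zero] at h3
  exact sub_eq_zero.mp h3
end

section
variable {K : Type*} [Field K] [CharZero K]
  (J : Polynomial K →ₗ[K] Polynomial K)
  (hJ : ∀ m : ℕ, J (X ^ m) = (((m : K) + 1)⁻¹) • X ^ (m + 1))

include hJ

lemma hcJn : ∀ (n : ℕ) (p : Polynomial K) (j : ℕ), j < n → ((J ^ n) p).coeff j = 0 := by
  intro n
  induction n with
  | zero => intro p j hj; omega
  | succ n ih =>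
    intro p j hj
    have hrw : (J ^ (n+1)) p = J ((J ^ n) p) := by rw [pow_succ']; rfl
    rcases j with _ | j
    · rw [hrw]; exact hc0 J hJ _
    · have h1 : (derivative (J ((J ^ n) p))).coeff j = 0 := by
        rw [hD J hJ]; exact ih p j (by omega)
      rw [coeff_derivative] at h1
      have h2 : ((j : K) + 1) ≠ 0 := by exact_mod_cast (Nat.cast_add_one_ne_zero (R := K) j)
      rw [hrw]
      exact (mul_eq_zero.mp h1).resolve_right h2

lemma hDJ : ∀ (i k : ℕ) (p : Polynomial K),
    derivative^[i] ((J ^ (i + k)) p) = (J ^ k) p := by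
  intro i
  induction i with
  | zero => intro k p; simp
  | succ i ih =>
    intro k p
    have hrw : (J ^ (i + 1 + k)) p = J ((J ^ (i + k)) p) := by
      rw [show i + 1 + k = (i + k) + 1 by omega, pow_succ']; rfl
    rw [Function.iterate_succ_apply, hrw, hD J hJ]
    exact ih k p

lemma hJDn : ∀ (m : ℕ) (p : Polynomial K), (∀ j, j < m → p.coeff j = 0) →
    (J ^ m) (derivative^[m] p) = p := by
  intro m
  induction m with
  | zero => intro p _; simp
  | succ m ih =>
    intro p hp
    rw [Function.iterate_succ_apply, pow_succ']
    rw [Module.End.mul_apply]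
    have h1 : ∀ j, j < m → (derivative p).coeff j = 0 := by
      intro j hj
      rw [coeff_derivative, hp (j+1) (by omega), zero_mul]
    rw [ih (derivative p) h1]
    exact hJD J hJ p (hp 0 (by omega))

end

section
variable {K : Type*} [Field K] [CharZero K]
  (J : Polynomial K →ₗ[K] Polynomial K)
  (hJ : ∀ m : ℕ, J (X ^ m) = (((m : K) + 1)⁻¹) • X ^ (m + 1))

include hJ

lemma star_eq (n : ℕ) (a b : Polynomial K) :
    starProd1 J n a b = derivative^[n] ((J ^ n) a * (J ^ (n + 1)) b) := by
  rw [iterate_derivative_mul]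
  unfold starProd1
  refine Finset.sum_congr rfl fun k hk => ?_
  have hk' : k ≤ n := Nat.lt_succ_iff.mp (Finset.mem_range.mp hk)
  have h1 : derivative^[n - k] ((J ^ n) a) = (J ^ k) a := by
    have := hDJ J hJ (n - k) k a
    rwa [Nat.sub_add_cancel hk'] at this
  have h2 : derivative^[k] ((J ^ (n + 1)) b) = (J ^ (n - k + 1)) b := by
    have := hDJ J hJ k (n - k + 1) b
    rwa [show k + (n - k + 1) = n + 1 by omega] at this
  rw [h1, h2, Nat.cast_smul_eq_nsmul]

lemma hlow (n : ℕ) (a b : Polynomial K) :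
    ∀ j, j < n → ((J ^ n) a * b).coeff j = 0 := by
  intro j hj
  rw [coeff_mul]
  refine Finset.sum_eq_zero fun x hx => ?_
  have : x.1 ≤ j := Finset.HasAntidiagonal.antidiagonal.fst_le hx
  rw [hcJn J hJ n a x.1 (by omega), zero_mul]

lemma hJnstar (n : ℕ) (a b : Polynomial K) :
    (J ^ n) (starProd1 J n a b) = (J ^ n) a * (J ^ (n + 1)) b := by
  rw [star_eq J hJ]
  exact hJDn J hJ n _ (hlow J hJ n a _)

lemma hparts (n : ℕ) (b c : Polynomial K) :
    J ((J ^ n) b * (J ^ (n + 1)) c) + J ((J ^ n) c * (J ^ (n + 1)) b) =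
      (J ^ (n + 1)) b * (J ^ (n + 1)) c := by
  have hs : ∀ p : Polynomial K, (J ^ (n + 1)) p = J ((J ^ n) p) := by
    intro p; rw [pow_succ']; rfl
  have hd : derivative ((J ^ (n + 1)) b * (J ^ (n + 1)) c) =
      (J ^ n) b * (J ^ (n + 1)) c + (J ^ n) c * (J ^ (n + 1)) b := by
    rw [derivative_mul, hs b, hs c, hD J hJ, hD J hJ]
    ring
  have h0 : ((J ^ (n + 1)) b * (J ^ (n + 1)) c).coeff 0 = 0 := by
    rw [mul_coeff_zero, hs b, hc0 J hJ, zero_mul]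
  rw [← map_add, ← hd, hJD J hJ _ h0]

lemma zinbiel_aux (n : ℕ) (a b c : Polynomial K) :
    starProd1 J n (starProd1 J n a b) c = starProd1 J n a (starProd1 J n b c) + starProd1 J n a (starProd1 J n c b) := by
  have hs : ∀ p : Polynomial K, (J ^ (n + 1)) p = J ((J ^ n) p) := by
    intro p; rw [pow_succ']; rfl
  rw [star_eq J hJ n (starProd1 J n a b) c, hJnstar J hJ,
      star_eq J hJ n a (starProd1 J n b c), star_eq J hJ n a (starProd1 J n c b),
      hs (starProd1 J n b c), hs (starProd1 J n c b), hJnstar J hJ, hJnstar J hJ]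
  have hadd : ∀ (m : ℕ) (p q : Polynomial K),
      derivative^[m] p + derivative^[m] q = derivative^[m] (p + q) := by
    intro m
    induction m with
    | zero => intro p q; simp
    | succ m ih => intro p q; rw [Function.iterate_succ_apply', Function.iterate_succ_apply',
        Function.iterate_succ_apply', ← map_add, ih]
  rw [hadd, ← mul_add, hparts J hJ, mul_assoc]

end

/-- For the integration operator `J` on `K[x]` (char `K` = 0), the product
`a ⋆ b = Σ_{i=0}^{n} C(n,i) • (Jⁱ a * Jⁿ⁻ⁱ⁺¹ b)` is left-Zinbiel:
`(a ⋆ b) ⋆ c = a ⋆ (b ⋆ c) + a ⋆ (c ⋆ b)`. -/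
theorem stmt_10 (K : Type*) [Field K] [CharZero K]
    (J : Polynomial K →ₗ[K] Polynomial K)
    (hJ : ∀ m : ℕ, J (X ^ m) = (((m : K) + 1)⁻¹) • X ^ (m + 1)) (n : ℕ) :
    ∀ a b c : Polynomial K,
      starProd1 J n (starProd1 J n a b) c =
        starProd1 J n a (starProd1 J n b c) + starProd1 J n a (starProd1 J n c b) := by
  intro a b c
  exact zinbiel_aux J hJ n a b c
end

section
/- Let K be a field of characteristic 0 and let J : K[x] → K[x] be the K-linear integration operator with J(xⁿ) = xⁿ⁺¹/(n+1). For all natural numbers k and n, the product a ⋆ b = Σ_{i=0}^{n} C(n,i)·Jⁱ(a)·Jⁿ⁻ⁱ⁺ᵏ(b) on K[x] is right-commutative: (a ⋆ b) ⋆ c = (a ⋆ c) ⋆ b for all a, b, c ∈ K[x]. -/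
open Polynomial

/-- The product `a ⋆ b = Σ_{i=0}^{n} C(n,i) • (Jⁱ a * Jⁿ⁻ⁱ⁺ᵏ b)`. -/
noncomputable def starProdK {K : Type*} [Field K]
    (J : Polynomial K →ₗ[K] Polynomial K) (k n : ℕ) (a b : Polynomial K) : Polynomial K :=
  ∑ i ∈ Finset.range (n + 1), (n.choose i : K) • ((J ^ i) a * (J ^ (n - i + k)) b)

namespace Stmt11Aux

/-- Vandermonde, in the form we need. -/
lemma vand (n M p : ℕ) :
    ∑ i ∈ Finset.range (n+1), n.choose i * M.choose (p+i) = (n+M).choose (n+p) := by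
  rw [Nat.add_choose_eq, Finset.Nat.sum_antidiagonal_eq_sum_range_succ_mk]
  rw [← Finset.sum_subset (Finset.range_subset_range.mpr (by omega : n+1 ≤ (n+p).succ))
    (fun x _ hx => by
      have : n < x := by simpa using hx
      simp [Nat.choose_eq_zero_of_lt this])]
  rw [← Finset.sum_range_reflect (fun j => n.choose j * M.choose (n+p-j)) (n+1)]
  refine Finset.sum_congr rfl fun i hi => ?_
  have hi' : i ≤ n := by simpa [Nat.lt_succ_iff] using hi
  rw [show n+1-1-i = n-i by omega, Nat.choose_symm hi', show n+p-(n-i) = p+i by omega]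

variable {K : Type*} [Field K] [CharZero K]

noncomputable def FF (k n p q : ℕ) : K :=
  ((p.factorial : K) * q.factorial * (p+q+2*n+k).factorial) /
    ((p+n).factorial * (q+n+k).factorial * (p+q+n+k).factorial)

lemma fact_ne (m : ℕ) : ((m.factorial : K)) ≠ 0 :=
  Nat.cast_ne_zero.mpr m.factorial_ne_zero

lemma FF_mul (k n p q r : ℕ) :
    (FF k n p q : K) * FF k n (p+q+n+k) r = FF k n p r * FF k n (p+r+n+k) q := by
  unfold FF
  rw [show p+q+n+k+r+2*n+k = p+q+r+3*n+2*k by ring,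
      show p+q+n+k+n = p+q+2*n+k by ring,
      show p+q+n+k+r+n+k = p+q+r+2*n+2*k by ring,
      show p+r+n+k+q+2*n+k = p+q+r+3*n+2*k by ring,
      show p+r+n+k+n = p+r+2*n+k by ring,
      show p+r+n+k+q+n+k = p+q+r+2*n+2*k by ring]
  rw [div_mul_div_comm, div_mul_div_comm,
      div_eq_div_iff (mul_ne_zero (mul_ne_zero (mul_ne_zero (fact_ne _) (fact_ne _)) (fact_ne _)) (mul_ne_zero (mul_ne_zero (fact_ne _) (fact_ne _)) (fact_ne _))) (mul_ne_zero (mul_ne_zero (mul_ne_zero (fact_ne _) (fact_ne _)) (fact_ne _)) (mul_ne_zero (mul_ne_zero (fact_ne _) (fact_ne _)) (fact_ne _)))]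
  ring

/-- The scalar sum identity. -/
lemma scalar_sum (k n p q : ℕ) :
    ∑ i ∈ Finset.range (n+1),
      (n.choose i : K) * ((p.factorial : K) / (p+i).factorial)
        * ((q.factorial : K) / (q+(n-i)+k).factorial) = FF k n p q := by
  set M := p+q+n+k with hM
  have step : ∀ i ∈ Finset.range (n+1),
      (n.choose i : K) * ((p.factorial : K) / (p+i).factorial)
        * ((q.factorial : K) / (q+(n-i)+k).factorial)
      = ((n.choose i * M.choose (p+i) : ℕ) : K) *
          ((p.factorial : K) * q.factorial / M.factorial) := by
    intro i hi
    have hi' : i ≤ n := by simpa [Nat.lt_succ_iff] using hi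
    have h1 : p+i ≤ M := by omega
    rw [Nat.cast_mul, Nat.cast_choose K h1, show M - (p+i) = q+(n-i)+k by omega]
    field_simp
    rw [div_eq_div_iff (mul_ne_zero (fact_ne _) (fact_ne _))
      (mul_ne_zero (mul_ne_zero (fact_ne _) (fact_ne _)) (fact_ne _))]
    ring
  rw [Finset.sum_congr rfl step, ← Finset.sum_mul, ← Nat.cast_sum, vand n M p]
  have h2 : n+p ≤ n+M := by omega
  rw [Nat.cast_choose K h2, show n+M-(n+p) = q+n+k by omega, FF,
      show n+M = p+q+2*n+k by omega, show n+p = p+n by omega]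
  rw [div_mul_div_comm, div_eq_div_iff (mul_ne_zero (mul_ne_zero (fact_ne _) (fact_ne _)) (fact_ne _)) (mul_ne_zero (mul_ne_zero (fact_ne _) (fact_ne _)) (fact_ne _))]
  ring

variable (J : Polynomial K →ₗ[K] Polynomial K)

lemma Jpow (hJ : ∀ m : ℕ, J (X ^ m) = (((m : K) + 1)⁻¹) • X ^ (m + 1)) (m i : ℕ) :
    (J ^ i) (X ^ m : Polynomial K)
      = ((m.factorial : K) / (m+i).factorial) • X ^ (m+i) := by
  induction i with
  | zero =>
    simp only [pow_zero, Module.End.one_apply, Nat.add_zero]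
    rw [div_self (fact_ne m), one_smul]
  | succ i ih =>
    rw [pow_succ', Module.End.mul_apply, ih, map_smul, hJ (m+i), smul_smul,
        show m + (i+1) = (m+i)+1 by omega]
    congr 1
    have h : ((m+i+1 : ℕ) : K) ≠ 0 := Nat.cast_ne_zero.mpr (by omega)
    rw [Nat.factorial_succ]
    push_cast
    push_cast at h
    field_simp

lemma star_pow (hJ : ∀ m : ℕ, J (X ^ m) = (((m : K) + 1)⁻¹) • X ^ (m + 1)) (k n p q : ℕ) :
    starProdK J k n (X ^ p) (X ^ q) = (FF k n p q : K) • X ^ (p+q+n+k) := by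
  rw [starProdK, ← scalar_sum (K := K) k n p q, Finset.sum_smul]
  refine Finset.sum_congr rfl fun i hi => ?_
  have hi' : i ≤ n := by simpa [Nat.lt_succ_iff] using hi
  rw [Jpow J hJ, Jpow J hJ, show q + (n-i+k) = q+(n-i)+k by omega,
      smul_mul_assoc, mul_smul_comm, smul_smul, smul_smul, ← pow_add,
      show p+i+(q+(n-i)+k) = p+q+n+k by omega, mul_assoc]

lemma star_add_left (k n : ℕ) (a a' b : Polynomial K) :
    starProdK J k n (a + a') b = starProdK J k n a b + starProdK J k n a' b := by
  simp [starProdK, add_mul, smul_add, Finset.sum_add_distrib]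

lemma star_add_right (k n : ℕ) (a b b' : Polynomial K) :
    starProdK J k n a (b + b') = starProdK J k n a b + starProdK J k n a b' := by
  simp [starProdK, mul_add, smul_add, Finset.sum_add_distrib]

lemma star_smul_left (k n : ℕ) (s : K) (a b : Polynomial K) :
    starProdK J k n (s • a) b = s • starProdK J k n a b := by
  simp [starProdK, Finset.smul_sum, smul_mul_assoc, smul_smul, mul_comm]

lemma star_smul_right (k n : ℕ) (s : K) (a b : Polynomial K) :
    starProdK J k n a (s • b) = s • starProdK J k n a b := by
  simp [starProdK, Finset.smul_sum, mul_smul_comm, smul_smul, mul_comm, mul_left_comm]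

end Stmt11Aux

open Stmt11Aux in
/-- For the integration operator `J` on `K[x]` (char `K` = 0) and all
naturals `k`, `n`, the product `a ⋆ b = Σ_{i=0}^{n} C(n,i) • (Jⁱ a * Jⁿ⁻ⁱ⁺ᵏ b)` is
right-commutative: `(a ⋆ b) ⋆ c = (a ⋆ c) ⋆ b`. -/
theorem stmt_11 (K : Type*) [Field K] [CharZero K]
    (J : Polynomial K →ₗ[K] Polynomial K)
    (hJ : ∀ m : ℕ, J (X ^ m) = (((m : K) + 1)⁻¹) • X ^ (m + 1)) (k n : ℕ) :
    ∀ a b c : Polynomial K,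
      starProdK J k n (starProdK J k n a b) c = starProdK J k n (starProdK J k n a c) b := by
  intro a b c
  have SP := star_pow J hJ k n
  induction a using Polynomial.induction_on' with
  | add a1 a2 h1 h2 => simp [star_add_left, h1, h2]
  | monomial p u =>
    induction b using Polynomial.induction_on' with
    | add b1 b2 h1 h2 => simp [star_add_left, star_add_right, h1, h2]
    | monomial q v =>
      induction c using Polynomial.induction_on' with
      | add c1 c2 h1 h2 => simp [star_add_left, star_add_right, h1, h2]
      | monomial r w =>
        rw [← smul_X_eq_monomial, ← smul_X_eq_monomial, ← smul_X_eq_monomial]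
        simp only [star_smul_left, star_smul_right, SP, smul_smul]
        rw [show p+q+n+k+r+n+k = p+r+n+k+q+n+k by ring]
        congr 1
        linear_combination (u*v*w) * FF_mul (K := K) k n p q r
end

section
/- Let K be a field of characteristic 0 and let J : K[x] → K[x] be the K-linear integration operator with J(xⁿ) = xⁿ⁺¹/(n+1). For every n ≥ 0 and all a, b ∈ K[x], Σ_{i=0}^{n+1} C(n+1,i)·(1 − 2i/(n+1))·Jⁱ(a)·Jⁿ⁺¹⁻ⁱ(b) = (a ⋆ b) − (b ⋆ a), where a ⋆ b = Σ_{i=0}^{n} C(n,i)·Jⁱ(a)·Jⁿ⁻ⁱ⁺¹(b). -/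
open Polynomial

/-- For the integration operator `J` on `K[x]` (char `K` = 0),
`Σ_{i=0}^{n+1} C(n+1,i)·(1 − 2i/(n+1)) • (Jⁱ a * Jⁿ⁺¹⁻ⁱ b) = a ⋆ b − b ⋆ a`,
where `a ⋆ b = Σ_{i=0}^{n} C(n,i) • (Jⁱ a * Jⁿ⁻ⁱ⁺¹ b)`. -/
theorem stmt_12 (K : Type*) [Field K] [CharZero K]
    (J : Polynomial K →ₗ[K] Polynomial K)
    (hJ : ∀ m : ℕ, J (X ^ m) = (((m : K) + 1)⁻¹) • X ^ (m + 1)) (n : ℕ) :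
    ∀ a b : Polynomial K,
      ∑ i ∈ Finset.range (n + 2),
          (((n + 1).choose i : K) * (1 - 2 * (i : K) / ((n : K) + 1))) •
            ((J ^ i) a * (J ^ (n + 1 - i)) b) =
        starProd1 J n a b - starProd1 J n b a := by
  
  intro a b
  have hn1 : ((n : K) + 1) ≠ 0 := Nat.cast_add_one_ne_zero n
  have key : ∀ i ∈ Finset.range (n + 2),
      (((n + 1).choose i : K) * (1 - 2 * (i : K) / ((n : K) + 1))) •
        ((J ^ i) a * (J ^ (n + 1 - i)) b)
      = ((n.choose i : K) - (n.choose (n + 1 - i) : K)) •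
        ((J ^ i) a * (J ^ (n + 1 - i)) b) := by
    intro i hi
    rw [Finset.mem_range] at hi
    congr 1
    rcases Nat.eq_zero_or_pos i with h0 | hpos
    · subst h0
      simp [Nat.choose_eq_zero_of_lt (by omega : n < n + 1 - 0)]
    · obtain ⟨j, rfl⟩ : ∃ j, i = j + 1 := ⟨i - 1, by omega⟩
      have hj : j ≤ n := by omega
      have h1 : ((n + 1).choose (j + 1) : K) = n.choose j + n.choose (j + 1) := by
        exact_mod_cast congrArg (Nat.cast : ℕ → K) (Nat.choose_succ_succ n j)
      have h2 : ((n : K) + 1) * n.choose j = (n + 1).choose (j + 1) * ((j : K) + 1) := by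
        exact_mod_cast congrArg (Nat.cast : ℕ → K) (Nat.add_one_mul_choose_eq n j)
      have h3 : n + 1 - (j + 1) = n - j := by omega
      rw [h3, Nat.choose_symm hj]
      push_cast
      field_simp
      ring_nf
      ring_nf at h1 h2
      linear_combination ((n : K) + 1) * h1 + 2 * h2
  rw [Finset.sum_congr rfl key]
  simp only [sub_smul]
  rw [Finset.sum_sub_distrib]
  congr 1
  · rw [Finset.sum_range_succ, Nat.choose_eq_zero_of_lt (by omega : n < n + 1)]
    simp only [Nat.cast_zero, zero_smul, add_zero, starProd1]
    refine Finset.sum_congr rfl fun i hi => ?_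
    rw [Finset.mem_range] at hi
    have e3 : n + 1 - i = n - i + 1 := by omega
    rw [e3]
  · rw [← Finset.sum_range_reflect, Finset.sum_range_succ]
    have e0 : n + 1 - (n + 2 - 1 - (n + 1)) = n + 1 := by omega
    rw [e0, Nat.choose_eq_zero_of_lt (by omega : n < n + 1)]
    simp only [Nat.cast_zero, zero_smul, add_zero, starProd1]
    refine Finset.sum_congr rfl fun i hi => ?_
    rw [Finset.mem_range] at hi
    have e1 : n + 2 - 1 - i = n + 1 - i := by omega
    have e2 : n + 1 - (n + 1 - i) = i := by omega
    have e3 : n + 1 - i = n - i + 1 := by omega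
    rw [e1, e2, e3, mul_comm ((J ^ (n - i + 1)) a)]
end

section
/- Let K be a field of characteristic 0, let ∂ be formal differentiation on K[x], and let J : K[x] → K[x] be the K-linear integration operator with J(xⁿ) = xⁿ⁺¹/(n+1). Then the product a ⋄ b = ∂(a)·J(b) on K[x] is right-symmetric: (a ⋄ b) ⋄ c − (a ⋄ c) ⋄ b = a ⋄ (b ⋄ c) − a ⋄ (c ⋄ b) for all a, b, c ∈ K[x]. -/
open Polynomial

/-- The product `a ⋄ b = ∂a * J b`. -/
noncomputable def diam {K : Type*} [Field K]
    (J : Polynomial K →ₗ[K] Polynomial K) (a b : Polynomial K) : Polynomial K :=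
  derivative a * J b

lemma deriv_J {K : Type*} [Field K] [CharZero K]
    (J : Polynomial K →ₗ[K] Polynomial K)
    (hJ : ∀ m : ℕ, J (X ^ m) = (((m : K) + 1)⁻¹) • X ^ (m + 1)) (p : Polynomial K) :
    derivative (J p) = p := by
  induction p using Polynomial.induction_on' with
  | add p q hp hq => simp [map_add, hp, hq]
  | monomial n a =>
    rw [← Polynomial.smul_X_eq_monomial, map_smul, hJ, map_smul, map_smul, derivative_X_pow]
    have h : ((n : K) + 1) ≠ 0 := Nat.cast_add_one_ne_zero n
    push_cast
    rw [smul_eq_C_mul, smul_eq_C_mul, ← mul_assoc (C (((n:K)+1)⁻¹)), ← C_mul,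
      inv_mul_cancel₀ h, map_one, one_mul, ← smul_eq_C_mul]

lemma coeff_J {K : Type*} [Field K] [CharZero K]
    (J : Polynomial K →ₗ[K] Polynomial K)
    (hJ : ∀ m : ℕ, J (X ^ m) = (((m : K) + 1)⁻¹) • X ^ (m + 1)) (p : Polynomial K) :
    (J p).coeff 0 = 0 := by
  induction p using Polynomial.induction_on' with
  | add p q hp hq => simp [map_add, hp, hq]
  | monomial n a =>
    rw [← Polynomial.smul_X_eq_monomial, map_smul, hJ]
    simp [coeff_X_pow]

lemma J_deriv {K : Type*} [Field K] [CharZero K]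
    (J : Polynomial K →ₗ[K] Polynomial K)
    (hJ : ∀ m : ℕ, J (X ^ m) = (((m : K) + 1)⁻¹) • X ^ (m + 1))
    (q : Polynomial K) (h0 : q.coeff 0 = 0) :
    J (derivative q) = q := by
  have hd : derivative (J (derivative q) - q) = 0 := by
    rw [derivative_sub, deriv_J J hJ, sub_self]
  have hc : (J (derivative q) - q) = C ((J (derivative q) - q).coeff 0) := by
    apply Polynomial.eq_C_of_natDegree_eq_zero
    exact Polynomial.natDegree_eq_zero_of_derivative_eq_zero hd
  rw [coeff_sub, coeff_J J hJ, h0, sub_zero, map_zero, sub_eq_zero] at hc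
  exact hc

/-- For the integration operator `J` on `K[x]` (char `K` = 0), the product
`a ⋄ b = ∂a * J b` is right-symmetric:
`(a ⋄ b) ⋄ c − (a ⋄ c) ⋄ b = a ⋄ (b ⋄ c) − a ⋄ (c ⋄ b)`. -/
theorem stmt_14 (K : Type*) [Field K] [CharZero K]
    (J : Polynomial K →ₗ[K] Polynomial K)
    (hJ : ∀ m : ℕ, J (X ^ m) = (((m : K) + 1)⁻¹) • X ^ (m + 1)) :
    ∀ a b c : Polynomial K,
      diam J (diam J a b) c - diam J (diam J a c) b =
        diam J a (diam J b c) - diam J a (diam J c b) := by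
  intro a b c
  have hbc : J (diam J b c) - J (diam J c b) = b * J c - c * J b := by
    have h0 : (b * J c - c * J b).coeff 0 = 0 := by
      simp [coeff_sub, Polynomial.mul_coeff_zero, coeff_J J hJ]
    have hd : derivative (b * J c - c * J b) = diam J b c - diam J c b := by
      simp only [derivative_sub, derivative_mul, deriv_J J hJ, diam]
      ring
    rw [← map_sub, ← hd, J_deriv J hJ _ h0]
  simp only [diam] at hbc ⊢
  simp only [derivative_mul, deriv_J J hJ]
  rw [← mul_sub, hbc]
  ring
end

section
/- Let K be a field of characteristic 0, let ∂ be formal differentiation on K[x], let J be the K-linear integration operator with J(xⁿ) = xⁿ⁺¹/(n+1), and let a ⋄ b = ∂(a)·J(b). Then the expression S(a, b, c, d) = ((a ⋄ b) ⋄ c) ⋄ d + ((a ⋄ c) ⋄ d) ⋄ b + ((a ⋄ d) ⋄ b) ⋄ c is symmetric under every permutation of b, c, d. -/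
open Polynomial

/-- `S(a, b, c, d) = ((a ⋄ b) ⋄ c) ⋄ d + ((a ⋄ c) ⋄ d) ⋄ b + ((a ⋄ d) ⋄ b) ⋄ c`. -/
noncomputable def Sdiam {K : Type*} [Field K]
    (J : Polynomial K →ₗ[K] Polynomial K) (a b c d : Polynomial K) : Polynomial K :=
  diam J (diam J (diam J a b) c) d + diam J (diam J (diam J a c) d) b
    + diam J (diam J (diam J a d) b) c

lemma derivJ {K : Type*} [Field K] [CharZero K]
    (J : Polynomial K →ₗ[K] Polynomial K)
    (hJ : ∀ m : ℕ, J (X ^ m) = (((m : K) + 1)⁻¹) • X ^ (m + 1)) :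
    ∀ p : Polynomial K, derivative (J p) = p := by
  intro p
  induction p using Polynomial.induction_on' with
  | add p q hp hq => simp [map_add, hp, hq]
  | monomial n r =>
    have h1 : ((n : K) + 1) ≠ 0 := Nat.cast_add_one_ne_zero n
    rw [← Polynomial.C_mul_X_pow_eq_monomial, ← Polynomial.smul_eq_C_mul, map_smul, hJ,
      map_smul, derivative_smul, derivative_X_pow, Nat.add_sub_cancel]
    congr 1
    rw [Polynomial.smul_eq_C_mul, ← mul_assoc, ← Polynomial.C_mul]
    push_cast
    rw [inv_mul_cancel₀ h1, Polynomial.C_1, one_mul]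

/-- For the integration operator `J` on `K[x]` (char `K` = 0) and the
product `a ⋄ b = ∂a * J b`, the expression `S(a, b, c, d)` is symmetric under every
permutation of `b`, `c`, `d`. -/
theorem stmt_16 (K : Type*) [Field K] [CharZero K]
    (J : Polynomial K →ₗ[K] Polynomial K)
    (hJ : ∀ m : ℕ, J (X ^ m) = (((m : K) + 1)⁻¹) • X ^ (m + 1)) :
    ∀ a b c d : Polynomial K,
      Sdiam J a b c d = Sdiam J a b d c ∧
      Sdiam J a b c d = Sdiam J a c b d ∧
      Sdiam J a b c d = Sdiam J a c d b ∧
      Sdiam J a b c d = Sdiam J a d b c ∧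
      Sdiam J a b c d = Sdiam J a d c b := by
  have hD := derivJ J hJ
  intro a b c d
  refine ⟨?_, ?_, ?_, ?_, ?_⟩ <;>
    · simp only [Sdiam, diam, derivative_mul, derivative_add, hD]
      ring
end

section
/- Let K be a field of characteristic 0 and let J : K[x] → K[x] be the K-linear integration operator with J(xⁿ) = xⁿ⁺¹/(n+1). Then the product a ⋆ b = a·J²(b) on K[x] satisfies the identity (a, b, [c, d]) + (a, c, [d, b]) + (a, d, [b, c]) = 0 for all a, b, c, d ∈ K[x], where (x, y, z) = x ⋆ (y ⋆ z) − (x ⋆ y) ⋆ z and [x, y] = x ⋆ y − y ⋆ x. -/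
open Polynomial

/-- The product `a ⋆ b = a * J² b`. -/
noncomputable def star2 {K : Type*} [Field K]
    (J : Polynomial K →ₗ[K] Polynomial K) (a b : Polynomial K) : Polynomial K :=
  a * J (J b)

/-- The commutator `[a, b] = a ⋆ b − b ⋆ a` of the product `⋆`. -/
noncomputable def sbrk {K : Type*} [Field K]
    (J : Polynomial K →ₗ[K] Polynomial K) (a b : Polynomial K) : Polynomial K :=
  star2 J a b - star2 J b a

/-- The associator `(x, y, z) = x ⋆ (y ⋆ z) − (x ⋆ y) ⋆ z` of the product `⋆`. -/
noncomputable def sassoc {K : Type*} [Field K]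
    (J : Polynomial K →ₗ[K] Polynomial K) (a b c : Polynomial K) : Polynomial K :=
  star2 J a (star2 J b c) - star2 J (star2 J a b) c

/-!
`J` is the right inverse of `d/dx` with `(J p)(0) = 0`, and in characteristic `0` a polynomial is
determined by its derivative and its value at `0`. The associator factors as
`(a, b, z) = a · E(b, z)` with `E(b, z) = J²(b · J²z) − J²b · J²z`; both `E` and `E'` vanish at `0`,
and `E'' = −2 Jb · Jz − J²b · z`. With `C = J²c`, `D = J²d` one has `[c, d] = (C'D − CD')'`, so
`J[c, d] = C'D − CD'` is a Wronskian, and the cyclic sums of `J²b · [c, d]` and of `Jb · J[c, d]`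
cancel identically.
-/

theorem Polynomial.eq_zero_of_derivative_eq_zero {R : Type*} [Semiring R] [IsAddTorsionFree R]
    {p : R[X]} (hp : derivative p = 0) (h0 : p.eval 0 = 0) : p = 0 := by
  rw [eq_C_of_derivative_eq_zero hp, coeff_zero_eq_eval_zero, h0, C_0]

noncomputable def sassocFactor {K : Type*} [Field K] (J : K[X] →ₗ[K] K[X]) (b z : K[X]) :
    K[X] :=
  J (J (b * J (J z))) - J (J b) * J (J z)

theorem sassoc_eq_mul_sassocFactor {K : Type*} [Field K] (J : K[X] →ₗ[K] K[X]) (a b z : K[X]) :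
    sassoc J a b z = a * sassocFactor J b z := by
  simp only [sassoc, star2, sassocFactor]
  ring

section RightInverse

variable {K : Type*} [Field K] {J : K[X] →ₗ[K] K[X]}
  (hD : ∀ p, derivative (J p) = p) (h0 : ∀ p, (J p).eval 0 = 0)

include h0 in
theorem eval_zero_sassocFactor (b z : K[X]) : (sassocFactor J b z).eval 0 = 0 := by
  simp only [sassocFactor, eval_sub, eval_mul, h0, zero_mul, sub_zero]

include hD h0 in
theorem eval_zero_derivative_sassocFactor (b z : K[X]) :
    (derivative (sassocFactor J b z)).eval 0 = 0 := by
  simp only [sassocFactor, derivative_sub, derivative_mul, hD, eval_sub, eval_add, eval_mul, h0,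
    mul_zero, add_zero, sub_zero]

include hD in
theorem derivative_derivative_sassocFactor (b z : K[X]) :
    derivative (derivative (sassocFactor J b z)) = -(2 * J b * J z + J (J b) * z) := by
  simp only [sassocFactor, derivative_sub, derivative_mul, derivative_add, hD]
  ring

include hD h0 in
theorem map_sbrk [CharZero K] (c d : K[X]) :
    J (sbrk J c d) = J c * J (J d) - J d * J (J c) := by
  rw [← sub_eq_zero]
  apply eq_zero_of_derivative_eq_zero
  · simp only [sbrk, star2, derivative_sub, derivative_mul, hD]
    ring
  · simp only [eval_sub, eval_mul, h0, zero_mul, sub_zero]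

include hD h0 in
theorem sassocFactor_sbrk_cyclic [CharZero K] (b c d : K[X]) :
    sassocFactor J b (sbrk J c d) + sassocFactor J c (sbrk J d b)
      + sassocFactor J d (sbrk J b c) = 0 := by
  apply eq_zero_of_derivative_eq_zero _
    (by simp only [eval_add, eval_zero_sassocFactor h0, add_zero])
  apply eq_zero_of_derivative_eq_zero _
    (by simp only [derivative_add, eval_add, eval_zero_derivative_sassocFactor hD h0, add_zero])
  simp only [derivative_add, derivative_derivative_sassocFactor hD, map_sbrk hD h0]
  simp only [sbrk, star2]
  ring

end RightInverse

section Integration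

variable {K : Type*} [Field K] {J : K[X] →ₗ[K] K[X]}
  (hJ : ∀ m : ℕ, J (X ^ m) = ((m : K) + 1)⁻¹ • X ^ (m + 1))
include hJ

theorem derivative_apply_of_map_X_pow [CharZero K] (p : K[X]) : derivative (J p) = p := by
  have hcomp : derivative ∘ₗ J = LinearMap.id := by
    ext n : 2
    simp only [LinearMap.comp_apply, LinearMap.id_apply, monomial_one_right_eq_X_pow, hJ,
      map_smul, derivative_X_pow]
    rw [smul_eq_C_mul, ← mul_assoc, ← C_mul]
    push_cast
    rw [inv_mul_cancel₀ (Nat.cast_add_one_ne_zero n), C_1, one_mul]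
  exact LinearMap.congr_fun hcomp p

theorem eval_zero_apply_of_map_X_pow (p : K[X]) : (J p).eval 0 = 0 := by
  have hcomp : leval 0 ∘ₗ J = 0 := by
    ext n : 2
    simp [monomial_one_right_eq_X_pow, hJ]
  exact LinearMap.congr_fun hcomp p

end Integration

/-- For the integration operator `J` on `K[x]` (char `K` = 0), the product
`a ⋆ b = a * J² b` satisfies `(a, b, [c, d]) + (a, c, [d, b]) + (a, d, [b, c]) = 0`. -/
theorem stmt_18 (K : Type*) [Field K] [CharZero K]
    (J : Polynomial K →ₗ[K] Polynomial K)
    (hJ : ∀ m : ℕ, J (X ^ m) = (((m : K) + 1)⁻¹) • X ^ (m + 1)) :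
    ∀ a b c d : Polynomial K,
      sassoc J a b (sbrk J c d) + sassoc J a c (sbrk J d b)
        + sassoc J a d (sbrk J b c) = 0 := by
  intro a b c d
  rw [sassoc_eq_mul_sassocFactor, sassoc_eq_mul_sassocFactor, sassoc_eq_mul_sassocFactor,
    ← mul_add, ← mul_add, sassocFactor_sbrk_cyclic (derivative_apply_of_map_X_pow hJ)
      (eval_zero_apply_of_map_X_pow hJ), mul_zero]
end
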